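/- For any joint distribution r on finite X1 × X2 × Y matching the pairwise marginals p(x1,x2), p(x1,y), p(x2,y) of a fixed distribution p, we have I_r(X1;X2|Y) ≥ H_p(X1) - I_p(X1;Y) - max_{r'∈Δ} H_{r'}(X1|X2,Y), where the max is over distributions r' matching the marginals p(x1,y) and p(x1,x2). Consequently I_p(X1;X2|Y) is lower bounded by this quantity. -/

import Mathlib

open Finset

noncomputable section

namespace PaperPID

variable {Ω₁ Ω₂ Ω₃ : Type*} [Fintype Ω₁] [Fintype Ω₂] [Fintype Ω₃]

/-- Shannon entropy in bits of a finitely supported distribution given as a function. -/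
def ent {α : Type*} [Fintype α] (p : α → ℝ) : ℝ := -∑ a, p a * Real.logb 2 (p a)

/-- `p` is a probability distribution. -/
def IsProb {α : Type*} [Fintype α] (p : α → ℝ) : Prop := (∀ a, 0 ≤ p a) ∧ ∑ a, p a = 1

/-- marginal on the first coordinate -/
def m1 (p : Ω₁ × Ω₂ × Ω₃ → ℝ) : Ω₁ → ℝ := fun a => ∑ b, ∑ c, p (a, b, c)

/-- marginal on the second coordinate -/
def m2 (p : Ω₁ × Ω₂ × Ω₃ → ℝ) : Ω₂ → ℝ := fun b => ∑ a, ∑ c, p (a, b, c)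

/-- marginal on the third coordinate -/
def m3 (p : Ω₁ × Ω₂ × Ω₃ → ℝ) : Ω₃ → ℝ := fun c => ∑ a, ∑ b, p (a, b, c)

/-- marginal on coordinates (1,2) -/
def m12 (p : Ω₁ × Ω₂ × Ω₃ → ℝ) : Ω₁ × Ω₂ → ℝ := fun z => ∑ c, p (z.1, z.2, c)

/-- marginal on coordinates (1,3) -/
def m13 (p : Ω₁ × Ω₂ × Ω₃ → ℝ) : Ω₁ × Ω₃ → ℝ := fun z => ∑ b, p (z.1, b, z.2)

/-- marginal on coordinates (2,3) -/
def m23 (p : Ω₁ × Ω₂ × Ω₃ → ℝ) : Ω₂ × Ω₃ → ℝ := fun z => ∑ a, p (a, z.1, z.2)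

/-- mutual information I(X₁;X₂) -/
def I12 (p : Ω₁ × Ω₂ × Ω₃ → ℝ) : ℝ := ent (m1 p) + ent (m2 p) - ent (m12 p)

/-- mutual information I(X₁;Y) (Y the third coordinate) -/
def I13 (p : Ω₁ × Ω₂ × Ω₃ → ℝ) : ℝ := ent (m1 p) + ent (m3 p) - ent (m13 p)

/-- mutual information I(X₂;Y) -/
def I23 (p : Ω₁ × Ω₂ × Ω₃ → ℝ) : ℝ := ent (m2 p) + ent (m3 p) - ent (m23 p)

/-- joint mutual information I({X₁,X₂};Y) -/
def Ijoint (p : Ω₁ × Ω₂ × Ω₃ → ℝ) : ℝ := ent (m12 p) + ent (m3 p) - ent p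

/-- conditional mutual information I(X₁;X₂ | Y) -/
def CMI12_3 (p : Ω₁ × Ω₂ × Ω₃ → ℝ) : ℝ := ent (m13 p) + ent (m23 p) - ent p - ent (m3 p)

/-- conditional mutual information I(X₁;Y | X₂) -/
def CMI13_2 (p : Ω₁ × Ω₂ × Ω₃ → ℝ) : ℝ := ent (m12 p) + ent (m23 p) - ent p - ent (m2 p)

/-- conditional mutual information I(X₂;Y | X₁) -/
def CMI23_1 (p : Ω₁ × Ω₂ × Ω₃ → ℝ) : ℝ := ent (m12 p) + ent (m13 p) - ent p - ent (m1 p)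

/-- interaction information I(X₁;X₂;Y), defined as I(X₁;Y) - I(X₁;Y|X₂). -/
def interactionInfo (p : Ω₁ × Ω₂ × Ω₃ → ℝ) : ℝ := I13 p - CMI13_2 p

/-- Δ_{p_{1,2}}: distributions matching the (x₁,y) and (x₂,y) marginals of p. -/
def DeltaP (p : Ω₁ × Ω₂ × Ω₃ → ℝ) : Set (Ω₁ × Ω₂ × Ω₃ → ℝ) :=
  {q | IsProb q ∧ m13 q = m13 p ∧ m23 q = m23 p}

/-- Δ_{p_{1,2,12}}: distributions matching all pairwise marginals of p. -/
def DeltaAll (p : Ω₁ × Ω₂ × Ω₃ → ℝ) : Set (Ω₁ × Ω₂ × Ω₃ → ℝ) :=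
  {r | IsProb r ∧ m12 r = m12 p ∧ m13 r = m13 p ∧ m23 r = m23 p}

/-- Δ_{p_{12,y}}: couplings of the (x₁,x₂) marginal with the y marginal of p. -/
def DeltaCoup (p : Ω₁ × Ω₂ × Ω₃ → ℝ) : Set (Ω₁ × Ω₂ × Ω₃ → ℝ) :=
  {r | IsProb r ∧ m12 r = m12 p ∧ m3 r = m3 p}

/-- first marginal of a distribution on a product of two spaces -/
def mA {α β : Type*} [Fintype α] [Fintype β] (p : α × β → ℝ) : α → ℝ := fun a => ∑ b, p (a, b)

/-- second marginal of a distribution on a product of two spaces -/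
def mB {α β : Type*} [Fintype α] [Fintype β] (p : α × β → ℝ) : β → ℝ := fun b => ∑ a, p (a, b)

/-- mutual information of a joint distribution on a product of two spaces -/
def MI2 {α β : Type*} [Fintype α] [Fintype β] (p : α × β → ℝ) : ℝ := ent (mA p) + ent (mB p) - ent p

/-! With `condEnt1_3 q = H_q(X₁|Y)` and `condEnt1_23 q = H_q(X₁|X₂,Y)`, the conditional mutual
information is `I_r(X₁;X₂|Y) = H_r(X₁|Y) - H_r(X₁|X₂,Y)`. The first term depends only on the
`(x₁,y)`-marginal, which `r` shares with `p`, so it equals `H_p(X₁) - I_p(X₁;Y)`; the second is at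
most the maximum `M`, because `r` (and `p` itself) matches the two marginals it is taken over. -/

def condEnt1_3 (q : Ω₁ × Ω₂ × Ω₃ → ℝ) : ℝ := ent (m13 q) - ent (m3 q)

def condEnt1_23 (q : Ω₁ × Ω₂ × Ω₃ → ℝ) : ℝ := ent q - ent (m23 q)

theorem m3_eq_mB_m13 (q : Ω₁ × Ω₂ × Ω₃ → ℝ) : m3 q = mB (m13 q) := rfl

theorem condEnt1_3_congr {q q' : Ω₁ × Ω₂ × Ω₃ → ℝ} (h : m13 q = m13 q') :
    condEnt1_3 q = condEnt1_3 q' := by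
  rw [condEnt1_3, condEnt1_3, m3_eq_mB_m13, m3_eq_mB_m13, h]

theorem ent_m1_sub_I13 (q : Ω₁ × Ω₂ × Ω₃ → ℝ) : ent (m1 q) - I13 q = condEnt1_3 q := by
  rw [I13, condEnt1_3]
  ring

theorem CMI12_3_eq_condEnt_sub (q : Ω₁ × Ω₂ × Ω₃ → ℝ) :
    CMI12_3 q = condEnt1_3 q - condEnt1_23 q := by
  rw [CMI12_3, condEnt1_3, condEnt1_23]
  ring

theorem condEnt1_3_sub_le_CMI12_3 {p r : Ω₁ × Ω₂ × Ω₃ → ℝ} {M : ℝ}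
    (hr13 : m13 r = m13 p) (hM : condEnt1_23 r ≤ M) :
    condEnt1_3 p - M ≤ CMI12_3 r := by
  rw [CMI12_3_eq_condEnt_sub, condEnt1_3_congr hr13]
  linarith

/-- for r matching all pairwise marginals of p,
I_r(X₁;X₂|Y) ≥ H_p(X₁) - I_p(X₁;Y) - max_{r'} H_{r'}(X₁|X₂,Y), where the max is over
distributions r' matching the (x₁,y) and (x₁,x₂) marginals of p; and consequently the
same lower bound holds for I_p(X₁;X₂|Y). -/
theorem cmi_lower_bound (p r : Ω₁ × Ω₂ × Ω₃ → ℝ) (hp : IsProb p)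
    (hr : r ∈ DeltaAll p) (M : ℝ)
    (hM : ∀ r' : Ω₁ × Ω₂ × Ω₃ → ℝ, IsProb r' → m13 r' = m13 p → m12 r' = m12 p →
      ent r' - ent (m23 r') ≤ M) :
    ent (m1 p) - I13 p - M ≤ CMI12_3 r ∧ ent (m1 p) - I13 p - M ≤ CMI12_3 p := by
  obtain ⟨hrProb, hr12, hr13, -⟩ := hr
  rw [ent_m1_sub_I13]
  exact ⟨condEnt1_3_sub_le_CMI12_3 hr13 (hM r hrProb hr13 hr12),
    condEnt1_3_sub_le_CMI12_3 rfl (hM p hp rfl rfl)⟩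

end PaperPID
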